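/- For all integers −1 ≤ l ≤ k and every integer 0 ≤ i ≤ k − l + 1, the vector field F^l_k annihilates the monomial x^{l+1} y^{2i} z^{2(k−l+1)−2i}, i.e. F^l_k(x^{l+1} y^{2i} z^{2(k−l+1)−2i}) = 0. Consequently every element of the subalgebra of ℝ[x,y,z] generated by the monomials x^{l+1} y^{2i} z^{2(k−l+1)−2i}, for i = 0, 1, …, k−l+1, is a first integral of F^l_k. -/
import Mathlib


noncomputable section
open MvPolynomial

/-- Polynomial functions of the variables x, y, z (indexed `0, 1, 2`). -/
abbrev Poly3 := MvPolynomial (Fin 3) ℝ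

/-- Polynomial vector fields on ℝ³, given by their three components. -/
abbrev VF3 := Fin 3 → Poly3

/-- The derivation action `v(g) = v₁ ∂g/∂x + v₂ ∂g/∂y + v₃ ∂g/∂z`. -/
def applyVF (v : VF3) (g : Poly3) : Poly3 := ∑ i, v i * pderiv i g

/-- The Lie bracket `[v,w] := v∘w − w∘v`, with i-th component `v(wᵢ) − w(vᵢ)`. -/
def bracket (v w : VF3) : VF3 := fun i => applyVF v (w i) - applyVF w (v i)

/-- The divergence `div v = ∂v₁/∂x + ∂v₂/∂y + ∂v₃/∂z`. -/
def divergence (v : VF3) : Poly3 := ∑ i, pderiv i (v i)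

/-- The vector field `F^l_k := x^l (y²+z²)^{k−l} ((k−l+1) x ∂_x − ((l+1)/2) y ∂_y − ((l+1)/2) z ∂_z)`
for integers `−1 ≤ l ≤ k`; for `l = −1` the second and third components vanish and this is
`(k+2)(y²+z²)^{k+1} ∂_x`. -/
def Fvf (l k : ℤ) : VF3 :=
  ![C ((k - l + 1 : ℤ) : ℝ) * X 0 ^ (l + 1).toNat * (X 1 ^ 2 + X 2 ^ 2) ^ (k - l).toNat,
    C (-((l + 1 : ℤ) : ℝ) / 2) * X 0 ^ l.toNat * X 1 * (X 1 ^ 2 + X 2 ^ 2) ^ (k - l).toNat,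
    C (-((l + 1 : ℤ) : ℝ) / 2) * X 0 ^ l.toNat * X 2 * (X 1 ^ 2 + X 2 ^ 2) ^ (k - l).toNat]

/-- The vector field `Θ^m_n := x^m (y²+z²)^{n−m} (z ∂_y − y ∂_z)` for integers `0 ≤ m ≤ n`. -/
def Tvf (m n : ℤ) : VF3 :=
  ![0,
    X 0 ^ m.toNat * (X 1 ^ 2 + X 2 ^ 2) ^ (n - m).toNat * X 2,
    -(X 0 ^ m.toNat * (X 1 ^ 2 + X 2 ^ 2) ^ (n - m).toNat * X 1)]

lemma applyVF_expand (v : VF3) (g : Poly3) :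
    applyVF v g = v 0 * pderiv 0 g + v 1 * pderiv 1 g + v 2 * pderiv 2 g := by
  simp [applyVF, Fin.sum_univ_three]

lemma applyVF_C (v : VF3) (r : ℝ) : applyVF v (C r) = 0 := by
  simp [applyVF]

lemma applyVF_add (v : VF3) (f g : Poly3) :
    applyVF v (f + g) = applyVF v f + applyVF v g := by
  simp [applyVF_expand, map_add]; ring

lemma applyVF_mul (v : VF3) (f g : Poly3) :
    applyVF v (f * g) = applyVF v f * g + f * applyVF v g := by
  simp [applyVF_expand, pderiv_mul]; ring

lemma hXp (j : Fin 3) (e : ℕ) :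
    (X j : Poly3) * ((e : Poly3) * X j ^ (e - 1)) = (e : Poly3) * X j ^ e := by
  cases e with
  | zero => simp
  | succ n => simp [pow_succ]; ring

lemma key (a p b c : ℕ) (h : (b:ℝ) + c = 2*((p:ℝ)+1)) :
    applyVF ![C ((p:ℝ)+1) * X 0 ^ (a+1) * (X 1^2 + X 2^2)^p,
              C (-((a:ℝ)+1)/2) * X 0 ^ a * X 1 * (X 1^2+X 2^2)^p,
              C (-((a:ℝ)+1)/2) * X 0 ^ a * X 2 * (X 1^2+X 2^2)^p]
      (X 0 ^ (a+1) * X 1 ^ b * X 2 ^ c) = 0 := by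
  have H : (C ((p:ℝ)+1) * ((a:Poly3)+1) + C (-((a:ℝ)+1)/2) * ((b:Poly3)+(c:Poly3)) : Poly3) = 0 := by
    have e1 : ((a : Poly3) + 1) = C ((a:ℝ) + 1) := by simp
    have e2 : ((b : Poly3) + (c : Poly3)) = C ((b:ℝ) + c) := by simp
    rw [e1, e2, ← map_mul, ← map_mul, ← map_add]
    rw [show ((p:ℝ)+1) * ((a:ℝ)+1) + -((a:ℝ)+1)/2 * ((b:ℝ)+c) = 0 by
      linear_combination (-((a:ℝ)+1)/2) * h]
    simp
  rw [applyVF_expand]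
  simp only [Matrix.cons_val_zero, Matrix.cons_val_one, Matrix.head_cons, Matrix.cons_val_two,
    Matrix.tail_cons]
  simp only [pderiv_mul, pderiv_pow, pderiv_X_self, pderiv_X_of_ne (by decide : (0:Fin 3) ≠ 1),
    pderiv_X_of_ne (by decide : (0:Fin 3) ≠ 2), pderiv_X_of_ne (by decide : (1:Fin 3) ≠ 0),
    pderiv_X_of_ne (by decide : (1:Fin 3) ≠ 2), pderiv_X_of_ne (by decide : (2:Fin 3) ≠ 0),
    pderiv_X_of_ne (by decide : (2:Fin 3) ≠ 1), mul_one, mul_zero, zero_mul, add_zero, zero_add,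
    Nat.add_sub_cancel, Nat.cast_add, Nat.cast_one]
  linear_combination (X 0^(2*a+1) * (X 1^2+X 2^2)^p * X 1^b * X 2^c : Poly3) * H
    + (C (-((a:ℝ)+1)/2) * X 0^(2*a+1) * (X 1^2+X 2^2)^p * X 2^c) * hXp 1 b
    + (C (-((a:ℝ)+1)/2) * X 0^(2*a+1) * (X 1^2+X 2^2)^p * X 1^b) * hXp 2 c

lemma part1 (l k : ℤ) (hl : -1 ≤ l) (hlk : l ≤ k) (i : ℕ) (hi : (i : ℤ) ≤ k - l + 1) :
    applyVF (Fvf l k)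
      (X 0 ^ (l + 1).toNat * X 1 ^ (2 * i) * X 2 ^ (2 * (k - l + 1).toNat - 2 * i)) = 0 := by
  rcases eq_or_lt_of_le hl with hE | hP
  · -- l = -1
    subst hE
    simp only [Fvf]
    rw [applyVF_expand]
    norm_num
    simp [pderiv_mul, pderiv_pow, pderiv_X_of_ne (by decide : (1:Fin 3) ≠ 0),
      pderiv_X_of_ne (by decide : (2:Fin 3) ≠ 0)]
  · -- l ≥ 0
    have hl0 : 0 ≤ l := by omega
    obtain ⟨a, rfl⟩ := Int.eq_ofNat_of_zero_le hl0
    have hp0 : 0 ≤ k - (a:ℤ) := by omega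
    obtain ⟨p, hp⟩ := Int.eq_ofNat_of_zero_le hp0
    have h1 : ((a:ℤ) + 1).toNat = a + 1 := by omega
    have h2 : ((a:ℤ)).toNat = a := by omega
    have h3 : (k - (a:ℤ)).toNat = p := by omega
    have h4 : (k - (a:ℤ) + 1).toNat = p + 1 := by omega
    have h5 : ((k - (a:ℤ) + 1 : ℤ) : ℝ) = (p:ℝ) + 1 := by
      rw [hp]; push_cast; ring
    have hi' : i ≤ p + 1 := by omega
    have hc : (((2*(p+1) - 2*i : ℕ)) : ℝ) = 2*(p+1) - 2*i := by
      have : 2*i ≤ 2*(p+1) := by omega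
      push_cast [Nat.cast_sub this]; ring
    have hcl : (2 * i : ℝ) + ((2*(p+1) - 2*i : ℕ) : ℝ) = 2 * ((p:ℝ)+1) := by
      rw [hc]; ring
    have := key a p (2*i) (2*(p+1) - 2*i) (by push_cast at hcl ⊢; linarith [hcl])
    simp only [Fvf, h1, h2, h3, h4, h5] at *
    rw [show (-(((a:ℤ) + 1 : ℤ) : ℝ)) = -((a:ℝ)+1) by push_cast; ring]
    convert this using 5

/-- `F^l_k` annihilates each monomial `x^{l+1} y^{2i} z^{2(k−l+1)−2i}` for
`0 ≤ i ≤ k−l+1`, and consequently every element of the subalgebra of ℝ[x,y,z] generated by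
these monomials is a first integral of `F^l_k`. -/
theorem Fvf_annihilates_monomials (l k : ℤ) (hl : -1 ≤ l) (hlk : l ≤ k) :
    (∀ i : ℕ, (i : ℤ) ≤ k - l + 1 →
      applyVF (Fvf l k)
        (X 0 ^ (l + 1).toNat * X 1 ^ (2 * i) * X 2 ^ (2 * (k - l + 1).toNat - 2 * i)) = 0) ∧
    ∀ g ∈ Algebra.adjoin ℝ {q : Poly3 | ∃ i : ℕ, (i : ℤ) ≤ k - l + 1 ∧
        q = X 0 ^ (l + 1).toNat * X 1 ^ (2 * i) * X 2 ^ (2 * (k - l + 1).toNat - 2 * i)},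
      applyVF (Fvf l k) g = 0 := by
  refine ⟨fun i hi => part1 l k hl hlk i hi, fun g hg => ?_⟩
  induction hg using Algebra.adjoin_induction with
  | mem x hx =>
    obtain ⟨i, hi, rfl⟩ := hx
    exact part1 l k hl hlk i hi
  | algebraMap r => exact applyVF_C _ r
  | add x y hx hy ihx ihy => rw [applyVF_add, ihx, ihy, add_zero]
  | mul x y hx hy ihx ihy => rw [applyVF_mul, ihx, ihy, zero_mul, mul_zero, add_zero]
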